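/- Fix a, r > 0 and 0 < A < B. Let f : ℝ → ℝ be smooth, positive, with 0 < f' ≤ 1, f(η) → 0 as η → −∞, f(η) = η for η ≥ a, and A·f'(−A) > r. Let s ∈ [0,1] and let λ : ℝ → ℝ be a smooth function with λ(η) = η for η ≥ 0, λ(η) = η + s(B−A) for η ≤ −sB, and 0 < λ' ≤ 1 everywhere. Then f ∘ λ is smooth, positive, satisfies 0 < (f∘λ)' ≤ 1, (f∘λ)(η) → 0 as η → −∞, (f∘λ)(η) = η for η ≥ a, and (A + s(B−A)) · (f∘λ)'(−A − s(B−A)) > r. -/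

import Mathlib

open Filter

/-- Reparametrization step in the proof that 𝓕(a,r) is path-connected. -/
theorem calF_reparam (a r A B : ℝ) (ha : 0 < a) (hr : 0 < r) (hA : 0 < A) (hAB : A < B)
    (f : ℝ → ℝ) (hfsmooth : ContDiff ℝ (⊤ : ℕ∞) f)
    (hfpos : ∀ η, 0 < f η)
    (hfderiv : ∀ η, 0 < deriv f η ∧ deriv f η ≤ 1)
    (hflim : Tendsto f atBot (nhds 0))
    (hfid : ∀ η, a ≤ η → f η = η)
    (hfA : A * deriv f (-A) > r)
    (s : ℝ) (hs : s ∈ Set.Icc (0:ℝ) 1)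
    (lam : ℝ → ℝ) (hlamsmooth : ContDiff ℝ (⊤ : ℕ∞) lam)
    (hlam₁ : ∀ η, 0 ≤ η → lam η = η)
    (hlam₂ : ∀ η, η ≤ -(s * B) → lam η = η + s * (B - A))
    (hlamderiv : ∀ η, 0 < deriv lam η ∧ deriv lam η ≤ 1) :
    ContDiff ℝ (⊤ : ℕ∞) (f ∘ lam) ∧
    (∀ η, 0 < (f ∘ lam) η) ∧
    (∀ η, 0 < deriv (f ∘ lam) η ∧ deriv (f ∘ lam) η ≤ 1) ∧
    Tendsto (f ∘ lam) atBot (nhds 0) ∧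
    (∀ η, a ≤ η → (f ∘ lam) η = η) ∧
    (A + s * (B - A)) * deriv (f ∘ lam) (-(A + s * (B - A))) > r := by
  obtain ⟨hs0, hs1⟩ := hs
  have hdf : Differentiable ℝ f := hfsmooth.differentiable (by simp)
  have hdl : Differentiable ℝ lam := hlamsmooth.differentiable (by simp)
  have hcomp : ∀ η, deriv (f ∘ lam) η = deriv f (lam η) * deriv lam η := fun η =>
    deriv_comp η (hdf (lam η)) (hdl η)
  have hsBA : 0 ≤ s * (B - A) := mul_nonneg hs0 (by linarith)
  refine ⟨hfsmooth.comp hlamsmooth, fun η => hfpos _, ?_, ?_, ?_, ?_⟩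
  · intro η
    rw [hcomp]
    exact ⟨mul_pos (hfderiv _).1 (hlamderiv _).1,
      mul_le_one₀ (hfderiv _).2 (hlamderiv _).1.le (hlamderiv _).2⟩
  · apply hflim.comp
    have : Tendsto (fun η => η + s * (B - A)) atBot atBot :=
      tendsto_atBot_add_const_right _ _ tendsto_id
    apply Tendsto.congr' _ this
    filter_upwards [eventually_le_atBot (-(s * B))] with η hη
    exact (hlam₂ η hη).symm
  · intro η hη
    have : lam η = η := hlam₁ η (le_trans ha.le hη)
    simp [Function.comp, this, hfid η hη]
  · set η₀ := -(A + s * (B - A)) with hη₀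
    have hle : η₀ ≤ -(s * B) := by
      have : s * A ≤ A := by nlinarith
      simp only [hη₀]; nlinarith
    have hlamη₀ : lam η₀ = -A := by rw [hlam₂ η₀ hle]; ring
    have hdl1 : deriv lam η₀ = 1 := by
      have h1 : HasDerivWithinAt lam 1 (Set.Iic η₀) η₀ := by
        have h := ((hasDerivAt_id η₀).add_const (s * (B - A))).hasDerivWithinAt
          (s := Set.Iic η₀)
        exact h.congr (fun x hx => hlam₂ x (le_trans hx hle)) (hlam₂ η₀ hle)
      have h2 : HasDerivWithinAt lam (deriv lam η₀) (Set.Iic η₀) η₀ :=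
        (hdl η₀).hasDerivAt.hasDerivWithinAt
      have hu : UniqueDiffWithinAt ℝ (Set.Iic η₀) η₀ :=
        uniqueDiffOn_Iic η₀ η₀ Set.self_mem_Iic
      rw [← h2.derivWithin hu, h1.derivWithin hu]
    rw [hcomp, hlamη₀, hdl1, mul_one]
    nlinarith [(hfderiv (-A)).1]
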